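/- Square matrices over a Kleene algebra form a Kleene algebra, with matrix addition, matrix multiplication, the identity and zero matrices, and a star operation defined by the standard block decomposition (for a 2×2 block matrix [[a,b],[c,d]], the star has top-left block (a + b·d*·c)*, etc.). -/

import Mathlib

/-!
Following Kozen, the star of a square matrix is defined by recursion on its size: split off one
index and use the block formula `[[a, b], [c, d]]∗ = [[f, f b d∗], [d∗ c f, d∗ + d∗ c f b d∗]]`
with `f = (a + b d∗ c)∗`. The unfolding law and both induction laws are verified blockwise from
those of the blocks. The induction laws have to be proved for rectangular `x`, because the
blocks of a square `x` are rectangular. A star satisfying these laws is unique, since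
`s a ≤ s a * s' a ≤ s' a`; hence the star does not depend on the enumeration of the index type,
and the `Fin 1` case and the block formula follow by comparing with the one-point star and with
the block construction.
-/

open scoped Computability

structure IsKleeneAlgebra {X : Type*} (add mul : X → X → X) (star : X → X)
    (one zero : X) : Prop where
  add_assoc : ∀ x y z, add (add x y) z = add x (add y z)
  add_comm : ∀ x y, add x y = add y x
  add_idem : ∀ x, add x x = x
  add_zero : ∀ x, add x zero = x
  mul_assoc : ∀ x y z, mul (mul x y) z = mul x (mul y z)
  one_mul : ∀ x, mul one x = x
  mul_one : ∀ x, mul x one = x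
  zero_mul : ∀ x, mul zero x = zero
  mul_zero : ∀ x, mul x zero = zero
  left_distrib : ∀ x y z, mul x (add y z) = add (mul x y) (mul x z)
  right_distrib : ∀ x y z, mul (add x y) z = add (mul x z) (mul y z)
  star_unfold : ∀ x, add (add one (mul x (star x))) (star x) = star x
  star_ind_left : ∀ x y, add (mul y x) x = x → add (mul (star y) x) x = x
  star_ind_right : ∀ x y, add (mul x y) x = x → add (mul x (star y)) x = x

universe u

namespace Matrix

variable {l m n o m₁ m₂ n₁ n₂ : Type*} {α : Type*}

-- Not a global instance: in the scope `MatrixOrder`, matrices carry the Loewner order instead.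
abbrev entrywisePartialOrder [PartialOrder α] : PartialOrder (Matrix m n α) :=
  inferInstanceAs (PartialOrder (m → n → α))

attribute [local instance] entrywisePartialOrder

theorem exists_eq_fromBlocks (M : Matrix (m₁ ⊕ m₂) (n₁ ⊕ n₂) α) :
    ∃ A B C D, M = fromBlocks A B C D :=
  ⟨_, _, _, _, (fromBlocks_toBlocks M).symm⟩

section PartialOrder

variable [PartialOrder α]

theorem le_def {A B : Matrix m n α} : A ≤ B ↔ ∀ i j, A i j ≤ B i j := Iff.rfl

theorem submatrix_le_submatrix {A B : Matrix m n α} (h : A ≤ B) (r : l → m) (c : o → n) :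
    A.submatrix r c ≤ B.submatrix r c := fun i j => h (r i) (c j)

theorem fromBlocks_le_fromBlocks_iff {A A' : Matrix m₁ n₁ α} {B B' : Matrix m₁ n₂ α}
    {C C' : Matrix m₂ n₁ α} {D D' : Matrix m₂ n₂ α} :
    fromBlocks A B C D ≤ fromBlocks A' B' C' D' ↔ A ≤ A' ∧ B ≤ B' ∧ C ≤ C' ∧ D ≤ D' := by
  simp only [le_def, Sum.forall, fromBlocks_apply₁₁, fromBlocks_apply₁₂, fromBlocks_apply₂₁,
    fromBlocks_apply₂₂, forall_and]
  tauto

theorem fromRows_le_fromRows_iff {A A' : Matrix m₁ n α} {B B' : Matrix m₂ n α} :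
    fromRows A B ≤ fromRows A' B' ↔ A ≤ A' ∧ B ≤ B' := by
  simp only [le_def, Sum.forall, fromRows_apply_inl, fromRows_apply_inr]

theorem fromCols_le_fromCols_iff {A A' : Matrix m n₁ α} {B B' : Matrix m n₂ α} :
    fromCols A B ≤ fromCols A' B' ↔ A ≤ A' ∧ B ≤ B' := by
  simp only [le_def, Sum.forall, fromCols_apply_inl, fromCols_apply_inr, forall_and]

end PartialOrder

section IdemSemiring

variable [IdemSemiring α] {A B C : Matrix m n α}

protected theorem add_le_iff : A + B ≤ C ↔ A ≤ C ∧ B ≤ C := by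
  simp only [le_def, add_apply, add_le_iff, forall_and]

protected theorem add_eq_right_iff_le : A + B = B ↔ A ≤ B := by
  simp only [← ext_iff, add_apply, add_eq_right_iff_le, le_def]

@[gcongr]
protected theorem add_le_add {A' B' : Matrix m n α} (hA : A ≤ A') (hB : B ≤ B') :
    A + B ≤ A' + B' := fun i j => add_le_add (hA i j) (hB i j)

end IdemSemiring

section Mul

variable [NonUnitalNonAssocSemiring α] [PartialOrder α] [IsOrderedAddMonoid α] [Fintype m]

@[gcongr]
protected theorem mul_le_mul_right [MulLeftMono α] {B C : Matrix m n α} (h : B ≤ C)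
    (A : Matrix l m α) : A * B ≤ A * C := fun _ j =>
  Finset.sum_le_sum fun k _ => mul_le_mul_right (h k j) _

@[gcongr]
protected theorem mul_le_mul_left [MulRightMono α] {B C : Matrix l m α} (h : B ≤ C)
    (A : Matrix m n α) : B * A ≤ C * A := fun i _ =>
  Finset.sum_le_sum fun k _ => mul_le_mul_left (h i k) _

end Mul

section Kleene

variable {X : Type*} [KleeneAlgebra X]

def uniqueStar {ι : Type*} [Unique ι] (a : Matrix ι ι X) : Matrix ι ι X :=
  of fun _ _ => (a default default)∗

def blockStar {ι κ : Type*} [Fintype ι] [Fintype κ] (s₁ : Matrix ι ι X → Matrix ι ι X)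
    (s₂ : Matrix κ κ X → Matrix κ κ X) (m : Matrix (ι ⊕ κ) (ι ⊕ κ) X) :
    Matrix (ι ⊕ κ) (ι ⊕ κ) X :=
  let b := m.toBlocks₁₂
  let c := m.toBlocks₂₁
  let d' := s₂ m.toBlocks₂₂
  let f := s₁ (m.toBlocks₁₁ + b * d' * c)
  fromBlocks f (f * b * d') (d' * c * f) (d' + d' * c * f * b * d')

theorem blockStar_fromBlocks {ι κ : Type*} [Fintype ι] [Fintype κ]
    {s₁ : Matrix ι ι X → Matrix ι ι X} {s₂ : Matrix κ κ X → Matrix κ κ X} (a : Matrix ι ι X)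
    (b : Matrix ι κ X) (c : Matrix κ ι X) (d : Matrix κ κ X) :
    blockStar s₁ s₂ (fromBlocks a b c d) =
      fromBlocks (s₁ (a + b * s₂ d * c)) (s₁ (a + b * s₂ d * c) * b * s₂ d)
        (s₂ d * c * s₁ (a + b * s₂ d * c))
        (s₂ d + s₂ d * c * s₁ (a + b * s₂ d * c) * b * s₂ d) :=
  rfl

variable {ι κ : Type u} [Fintype ι] [DecidableEq ι] [Fintype κ] [DecidableEq κ]

structure IsKleeneStar (ι : Type u) [Fintype ι] [DecidableEq ι]
    (s : Matrix ι ι X → Matrix ι ι X) : Prop where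
  one_add_mul_le : ∀ a, 1 + a * s a ≤ s a
  star_mul_le_self : ∀ a {ρ : Type u} (x : Matrix ι ρ X), a * x ≤ x → s a * x ≤ x
  mul_star_le_self : ∀ a {ρ : Type u} (x : Matrix ρ ι X), x * a ≤ x → x * s a ≤ x

namespace IsKleeneStar

variable {s s' : Matrix ι ι X → Matrix ι ι X}

theorem one_le (h : IsKleeneStar ι s) (a : Matrix ι ι X) : 1 ≤ s a :=
  (Matrix.add_le_iff.1 (h.one_add_mul_le a)).1

theorem mul_le (h : IsKleeneStar ι s) (a : Matrix ι ι X) : a * s a ≤ s a :=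
  (Matrix.add_le_iff.1 (h.one_add_mul_le a)).2

theorem apply_le (h : IsKleeneStar ι s) (h' : IsKleeneStar ι s') (a : Matrix ι ι X) :
    s a ≤ s' a :=
  calc s a = s a * 1 := (Matrix.mul_one _).symm
    _ ≤ s a * s' a := Matrix.mul_le_mul_right (h'.one_le a) _
    _ ≤ s' a := h.star_mul_le_self a _ (h'.mul_le a)

theorem unique (h : IsKleeneStar ι s) (h' : IsKleeneStar ι s') : s = s' :=
  funext fun a => le_antisymm (h.apply_le h' a) (h'.apply_le h a)

theorem isKleeneAlgebra (h : IsKleeneStar ι s) : IsKleeneAlgebra (· + ·) (· * ·) s 1 0 where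
  add_assoc := add_assoc
  add_comm := add_comm
  add_idem _ := Matrix.add_eq_right_iff_le.2 le_rfl
  add_zero := add_zero
  mul_assoc := Matrix.mul_assoc
  one_mul := Matrix.one_mul
  mul_one := Matrix.mul_one
  zero_mul := Matrix.zero_mul
  mul_zero := Matrix.mul_zero
  left_distrib := Matrix.mul_add
  right_distrib := Matrix.add_mul
  star_unfold a := Matrix.add_eq_right_iff_le.2 (h.one_add_mul_le a)
  star_ind_left x y hxy :=
    Matrix.add_eq_right_iff_le.2 (h.star_mul_le_self y x (Matrix.add_eq_right_iff_le.1 hxy))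
  star_ind_right x y hxy :=
    Matrix.add_eq_right_iff_le.2 (h.mul_star_le_self y x (Matrix.add_eq_right_iff_le.1 hxy))

theorem of_isEmpty [IsEmpty ι] (s : Matrix ι ι X → Matrix ι ι X) : IsKleeneStar ι s :=
  ⟨fun _ i => isEmptyElim i, fun _ _ _ _ i => isEmptyElim i, fun _ _ _ _ _ j => isEmptyElim j⟩

theorem reindex (e : ι ≃ κ) {s : Matrix κ κ X → Matrix κ κ X} (h : IsKleeneStar κ s) :
    IsKleeneStar ι fun a => Matrix.reindex e.symm e.symm (s (Matrix.reindex e e a)) where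
  one_add_mul_le a := by
    have := submatrix_le_submatrix (h.one_add_mul_le (Matrix.reindex e e a)) e e
    rw [submatrix_add, Pi.add_apply, Pi.add_apply, submatrix_one_equiv,
      ← submatrix_mul_equiv _ _ _ e] at this
    simpa using this
  star_mul_le_self a ρ x hx := by
    have hx' := submatrix_le_submatrix hx e.symm id
    rw [← submatrix_mul_equiv a x e.symm e.symm id] at hx'
    have := submatrix_le_submatrix (h.star_mul_le_self _ (x.submatrix e.symm id) hx') e id
    rw [← submatrix_mul_equiv _ _ _ e] at this
    simpa using this
  mul_star_le_self a ρ x hx := by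
    have hx' := submatrix_le_submatrix hx id e.symm
    rw [← submatrix_mul_equiv x a id e.symm e.symm] at hx'
    have := submatrix_le_submatrix (h.mul_star_le_self _ (x.submatrix id e.symm) hx') id e
    rw [← submatrix_mul_equiv _ _ _ e] at this
    simpa using this

end IsKleeneStar

theorem isKleeneStar_uniqueStar [Unique ι] : IsKleeneStar ι (uniqueStar (X := X)) where
  one_add_mul_le a i j := by
    rw [Unique.eq_default i, Unique.eq_default j]
    simpa [uniqueStar, mul_apply] using add_le one_le_kstar mul_kstar_le_kstar
  star_mul_le_self a ρ x hx i j := by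
    have hx' : a default default * x default j ≤ x default j := by
      simpa [mul_apply] using hx default j
    simpa [Unique.eq_default i, uniqueStar, mul_apply] using kstar_mul_le_self hx'
  mul_star_le_self a ρ x hx i j := by
    have hx' : x i default * a default default ≤ x i default := by
      simpa [mul_apply] using hx i default
    simpa [Unique.eq_default j, uniqueStar, mul_apply] using mul_kstar_le_self hx'

variable {s₁ : Matrix ι ι X → Matrix ι ι X} {s₂ : Matrix κ κ X → Matrix κ κ X}

theorem one_add_mul_blockStar_le (h₁ : IsKleeneStar ι s₁) (h₂ : IsKleeneStar κ s₂)
    (m : Matrix (ι ⊕ κ) (ι ⊕ κ) X) : 1 + m * blockStar s₁ s₂ m ≤ blockStar s₁ s₂ m := by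
  obtain ⟨a, b, c, d, rfl⟩ := exists_eq_fromBlocks m
  rw [blockStar_fromBlocks, ← fromBlocks_one, fromBlocks_multiply, fromBlocks_add,
    fromBlocks_le_fromBlocks_iff]
  set d' := s₂ d
  set f := s₁ (a + b * d' * c)
  have hf : 1 + (a + b * d' * c) * f ≤ f := h₁.one_add_mul_le _
  have hd : 1 + d * d' ≤ d' := h₂.one_add_mul_le d
  refine ⟨?_, ?_, ?_, ?_⟩
  · calc 1 + (a * f + b * (d' * c * f)) = 1 + (a + b * d' * c) * f := by
          simp only [Matrix.add_mul, Matrix.mul_assoc]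
      _ ≤ f := hf
  · calc 0 + (a * (f * b * d') + b * (d' + d' * c * f * b * d'))
          = (1 + (a + b * d' * c) * f) * (b * d') := by
          simp only [Matrix.add_mul, Matrix.mul_add, Matrix.mul_assoc, Matrix.one_mul, zero_add]
          abel
      _ ≤ f * (b * d') := by gcongr
      _ = f * b * d' := by simp only [Matrix.mul_assoc]
  · calc 0 + (c * f + d * (d' * c * f)) = (1 + d * d') * (c * f) := by
          simp only [Matrix.add_mul, Matrix.mul_assoc, Matrix.one_mul, zero_add]
      _ ≤ d' * (c * f) := by gcongr
      _ = d' * c * f := by simp only [Matrix.mul_assoc]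
  · calc 1 + (c * (f * b * d') + d * (d' + d' * c * f * b * d'))
          = (1 + d * d') + (1 + d * d') * (c * f * b * d') := by
          simp only [Matrix.add_mul, Matrix.mul_add, Matrix.mul_assoc, Matrix.one_mul]
          abel
      _ ≤ d' + d' * (c * f * b * d') := by gcongr
      _ = d' + d' * c * f * b * d' := by simp only [Matrix.mul_assoc]

theorem blockStar_mul_le_self (h₁ : IsKleeneStar ι s₁) (h₂ : IsKleeneStar κ s₂)
    (m : Matrix (ι ⊕ κ) (ι ⊕ κ) X) {ρ : Type u} (x : Matrix (ι ⊕ κ) ρ X) (hx : m * x ≤ x) :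
    blockStar s₁ s₂ m * x ≤ x := by
  obtain ⟨a, b, c, d, rfl⟩ := exists_eq_fromBlocks m
  obtain ⟨p, r, rfl⟩ : ∃ p r, x = fromRows p r := ⟨_, _, (fromRows_toRows x).symm⟩
  rw [fromBlocks_mul_fromRows, fromRows_le_fromRows_iff, Matrix.add_le_iff,
    Matrix.add_le_iff] at hx
  obtain ⟨⟨hap, hbr⟩, hcp, hdr⟩ := hx
  rw [blockStar_fromBlocks, fromBlocks_mul_fromRows, fromRows_le_fromRows_iff]
  set d' := s₂ d
  set f := s₁ (a + b * d' * c)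
  have hd'r : d' * r ≤ r := h₂.star_mul_le_self d r hdr
  have hd'c : ∀ y ≤ p, d' * (c * y) ≤ r := fun y hy =>
    calc d' * (c * y) ≤ d' * r := by gcongr; exact (Matrix.mul_le_mul_right hy c).trans hcp
      _ ≤ r := hd'r
  have hbd' : b * (d' * r) ≤ p := (Matrix.mul_le_mul_right hd'r b).trans hbr
  have hfp : f * p ≤ p := h₁.star_mul_le_self _ p <|
    calc (a + b * d' * c) * p = a * p + b * (d' * (c * p)) := by
          simp only [Matrix.add_mul, Matrix.mul_assoc]
      _ ≤ p := Matrix.add_le_iff.2 ⟨hap, (Matrix.mul_le_mul_right (hd'c p le_rfl) b).trans hbr⟩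
  have hfbd' : f * (b * (d' * r)) ≤ p := (Matrix.mul_le_mul_right hbd' f).trans hfp
  constructor
  · calc f * p + f * b * d' * r = f * p + f * (b * (d' * r)) := by
          simp only [Matrix.mul_assoc]
      _ ≤ p := Matrix.add_le_iff.2 ⟨hfp, hfbd'⟩
  · calc d' * c * f * p + (d' + d' * c * f * b * d') * r
          = d' * (c * (f * p)) + (d' * r + d' * (c * (f * (b * (d' * r))))) := by
          simp only [Matrix.add_mul, Matrix.mul_assoc]
      _ ≤ r := Matrix.add_le_iff.2 ⟨hd'c _ hfp, Matrix.add_le_iff.2 ⟨hd'r, hd'c _ hfbd'⟩⟩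

theorem mul_blockStar_le_self (h₁ : IsKleeneStar ι s₁) (h₂ : IsKleeneStar κ s₂)
    (m : Matrix (ι ⊕ κ) (ι ⊕ κ) X) {ρ : Type u} (x : Matrix ρ (ι ⊕ κ) X) (hx : x * m ≤ x) :
    x * blockStar s₁ s₂ m ≤ x := by
  obtain ⟨a, b, c, d, rfl⟩ := exists_eq_fromBlocks m
  obtain ⟨p, q, rfl⟩ : ∃ p q, x = fromCols p q := ⟨_, _, (fromCols_toCols x).symm⟩
  rw [fromCols_mul_fromBlocks, fromCols_le_fromCols_iff, Matrix.add_le_iff,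
    Matrix.add_le_iff] at hx
  obtain ⟨⟨hpa, hqc⟩, hpb, hqd⟩ := hx
  rw [blockStar_fromBlocks, fromCols_mul_fromBlocks, fromCols_le_fromCols_iff]
  set d' := s₂ d
  set f := s₁ (a + b * d' * c)
  have hqd' : q * d' ≤ q := h₂.mul_star_le_self d q hqd
  have hbd' : ∀ y ≤ p, y * b * d' ≤ q := fun y hy =>
    calc y * b * d' ≤ q * d' := by gcongr; exact (Matrix.mul_le_mul_left hy b).trans hpb
      _ ≤ q := hqd'
  have hd'c : q * d' * c ≤ p := (Matrix.mul_le_mul_left hqd' c).trans hqc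
  have hpf : p * f ≤ p := h₁.mul_star_le_self _ p <|
    calc p * (a + b * d' * c) = p * a + p * b * d' * c := by
          simp only [Matrix.mul_add, Matrix.mul_assoc]
      _ ≤ p := Matrix.add_le_iff.2 ⟨hpa, (Matrix.mul_le_mul_left (hbd' p le_rfl) c).trans hqc⟩
  have hd'cf : q * d' * c * f ≤ p := (Matrix.mul_le_mul_left hd'c f).trans hpf
  constructor
  · calc p * f + q * (d' * c * f) = p * f + q * d' * c * f := by
          simp only [Matrix.mul_assoc]
      _ ≤ p := Matrix.add_le_iff.2 ⟨hpf, hd'cf⟩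
  · calc p * (f * b * d') + q * (d' + d' * c * f * b * d')
          = p * f * b * d' + (q * d' + q * d' * c * f * b * d') := by
          simp only [Matrix.mul_add, Matrix.mul_assoc]
      _ ≤ q := Matrix.add_le_iff.2 ⟨hbd' _ hpf, Matrix.add_le_iff.2 ⟨hqd', hbd' _ hd'cf⟩⟩

theorem IsKleeneStar.blockStar (h₁ : IsKleeneStar ι s₁) (h₂ : IsKleeneStar κ s₂) :
    IsKleeneStar (ι ⊕ κ) (blockStar s₁ s₂) :=
  ⟨one_add_mul_blockStar_le h₁ h₂, blockStar_mul_le_self h₁ h₂, mul_blockStar_le_self h₁ h₂⟩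

end Kleene

theorem exists_isKleeneStar_fin {X : Type*} [KleeneAlgebra X] :
    ∀ n : ℕ, ∃ s, IsKleeneStar (X := X) (Fin n) s
  | 0 => ⟨id, .of_isEmpty _⟩
  | n + 1 =>
    let ⟨_, hs⟩ := exists_isKleeneStar_fin n
    ⟨_, (hs.blockStar isKleeneStar_uniqueStar).reindex finSumFinEquiv.symm⟩

theorem exists_isKleeneStar {X : Type*} [KleeneAlgebra X] (ι : Type) [Fintype ι]
    [DecidableEq ι] : ∃ s, IsKleeneStar (X := X) ι s :=
  let ⟨_, hs⟩ := exists_isKleeneStar_fin (Fintype.card ι)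
  ⟨_, hs.reindex (Fintype.equivFin ι)⟩

end Matrix

theorem matrix_kleeneAlgebra (X : Type) [KleeneAlgebra X] :
    ∃ S : ∀ (ι : Type) [Fintype ι] [DecidableEq ι],
        Matrix ι ι X → Matrix ι ι X,
      (∀ (ι : Type) [Fintype ι] [DecidableEq ι],
        IsKleeneAlgebra (X := Matrix ι ι X) (· + ·) (· * ·) (S ι) 1 0)
      ∧ (∀ (x : X), S (Fin 1) (Matrix.of fun _ _ => x) 0 0 = KStar.kstar x)
      ∧ (∀ (ι κ : Type) [Fintype ι] [DecidableEq ι] [Fintype κ] [DecidableEq κ]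
          (a : Matrix ι ι X) (b : Matrix ι κ X) (c : Matrix κ ι X) (d : Matrix κ κ X),
          (S (ι ⊕ κ) (Matrix.fromBlocks a b c d)).toBlocks₁₁
            = S ι (a + b * S κ d * c)) := by
  choose S hS using fun (ι : Type) [Fintype ι] [DecidableEq ι] =>
    Matrix.exists_isKleeneStar (X := X) ι
  refine ⟨S, fun ι _ _ => (hS ι).isKleeneAlgebra, fun x => ?_, fun ι κ _ _ _ _ a b c d => ?_⟩
  · rw [(hS (Fin 1)).unique Matrix.isKleeneStar_uniqueStar]
    rfl
  · rw [(hS (ι ⊕ κ)).unique ((hS ι).blockStar (hS κ)), Matrix.blockStar_fromBlocks,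
      Matrix.toBlocks_fromBlocks₁₁]
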